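/- Let ρ₁, ρ₂ : ℂ^{n+2} → ℝ be smooth functions defining a submanifold X = {ρ₁ = 0} ∩ {ρ₂ = 0} near a point p with dρ₁(p), dρ₂(p) linearly independent. Then the complex tangent space H_p = T_pX ∩ J(T_pX) has real dimension 2n+2 (i.e., p is a complex jump point) if and only if ∂ρ₁(p) ∧ ∂ρ₂(p) = 0, where ∂ρ denotes the (1,0)-part of dρ. -/

import Mathlib

/-- The `(1,0)`-part `∂ρ(p)` of the real differential of `ρ : ℂ^m → ℝ` at `p`,
evaluated on `v`: `∂ρ(p)(v) = (dρ(p)(v) - i · dρ(p)(i·v))/2`. -/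
noncomputable def dbar10 {m : ℕ} (ρ : (Fin m → ℂ) → ℝ) (p v : Fin m → ℂ) : ℂ :=
  (((fderiv ℝ ρ p v : ℝ) : ℂ) - Complex.I * ((fderiv ℝ ρ p (Complex.I • v) : ℝ) : ℂ)) / 2

/-- Multiplication by `i`, as a real-linear map on `ℂ^m`. -/
noncomputable def Jstd (m : ℕ) : (Fin m → ℂ) →ₗ[ℝ] (Fin m → ℂ) :=
  Complex.I • (LinearMap.id : (Fin m → ℂ) →ₗ[ℝ] (Fin m → ℂ))

open Module

section Aux

variable {m : ℕ}

/-- The `(1,0)`-part of a real-linear functional, as a complex-linear functional. -/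
noncomputable def phiOf (L : (Fin m → ℂ) →ₗ[ℝ] ℝ) : (Fin m → ℂ) →ₗ[ℂ] ℂ where
  toFun v := (((L v : ℝ) : ℂ) - Complex.I * ((L (Complex.I • v) : ℝ) : ℂ)) / 2
  map_add' u v := by
    show (((L (u + v) : ℝ) : ℂ) - Complex.I * ((L (Complex.I • (u + v)) : ℝ) : ℂ)) / 2 =
      (((L u : ℝ) : ℂ) - Complex.I * ((L (Complex.I • u) : ℝ) : ℂ)) / 2 +
      (((L v : ℝ) : ℂ) - Complex.I * ((L (Complex.I • v) : ℝ) : ℂ)) / 2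
    rw [smul_add, map_add, map_add]
    push_cast
    ring
  map_smul' c v := by
    have key : ∀ (a : ℂ) (w : Fin m → ℂ),
        L (a • w) = a.re * L w + a.im * L (Complex.I • w) := by
      intro a w
      have hw : a • w = (a.re : ℝ) • w + (a.im : ℝ) • (Complex.I • w) := by
        funext i
        simp only [Pi.add_apply, Pi.smul_apply, smul_eq_mul, Complex.real_smul]
        conv_lhs => rw [← Complex.re_add_im a]
        push_cast
        ring
      rw [hw, map_add, map_smul, map_smul, smul_eq_mul, smul_eq_mul]
    show (((L (c • v) : ℝ) : ℂ) - Complex.I * ((L (Complex.I • (c • v)) : ℝ) : ℂ)) / 2 =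
      c * ((((L v : ℝ) : ℂ) - Complex.I * ((L (Complex.I • v) : ℝ) : ℂ)) / 2)
    have e1 : L (c • v) = c.re * L v + c.im * L (Complex.I • v) := key c v
    have e2 : L (Complex.I • (c • v)) = -c.im * L v + c.re * L (Complex.I • v) := by
      have : Complex.I • (c • v) = (Complex.I * c) • v := smul_smul _ _ _
      rw [this, key (Complex.I * c) v]
      simp [Complex.mul_re, Complex.mul_im]
    rw [e1, e2]
    conv_rhs => rw [← Complex.re_add_im c]
    push_cast
    ring_nf
    rw [Complex.I_sq]
    ring

lemma phiOf_eq_zero_iff (L : (Fin m → ℂ) →ₗ[ℝ] ℝ) (v : Fin m → ℂ) :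
    phiOf L v = 0 ↔ L v = 0 ∧ L (Complex.I • v) = 0 := by
  simp only [phiOf, LinearMap.coe_mk, AddHom.coe_mk]
  rw [div_eq_zero_iff]
  constructor
  · rintro (h | h)
    · have hre := congrArg Complex.re h
      have him := congrArg Complex.im h
      simp at hre him
      exact ⟨hre, him⟩
    · exact absurd h two_ne_zero
  · rintro ⟨h1, h2⟩
    left
    rw [h1, h2]
    simp

lemma phiOf_ne_zero (L : (Fin m → ℂ) →ₗ[ℝ] ℝ) (hL : L ≠ 0) : phiOf L ≠ 0 := by
  intro h
  apply hL
  refine LinearMap.ext fun v => ?_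
  have := (phiOf_eq_zero_iff L v).mp (by rw [h]; rfl)
  simpa using this.1

/-- The complex tangent space as a restriction of scalars. -/
lemma tangent_eq_restrict (L₁ L₂ : (Fin m → ℂ) →ₗ[ℝ] ℝ) :
    (LinearMap.ker L₁ ⊓ LinearMap.ker L₂) ⊓
      (LinearMap.ker L₁ ⊓ LinearMap.ker L₂).map (Jstd m) =
    Submodule.restrictScalars ℝ (LinearMap.ker (phiOf L₁) ⊓ LinearMap.ker (phiOf L₂)) := by
  ext v
  simp only [Submodule.mem_inf, LinearMap.mem_ker, Submodule.mem_map,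
    Submodule.restrictScalars_mem, phiOf_eq_zero_iff]
  constructor
  · rintro ⟨⟨h1, h2⟩, w, ⟨hw1, hw2⟩, hwv⟩
    have hJ : Complex.I • w = v := by simpa [Jstd] using hwv
    have hIv : Complex.I • v = -w := by
      rw [← hJ, smul_smul, Complex.I_mul_I, neg_one_smul]
    refine ⟨⟨h1, ?_⟩, h2, ?_⟩ <;> rw [hIv, map_neg] <;> simp [hw1, hw2]
  · rintro ⟨⟨h1, h1'⟩, h2, h2'⟩
    refine ⟨⟨h1, h2⟩, (-Complex.I) • v, ⟨?_, ?_⟩, ?_⟩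
    · rw [show (-Complex.I) • v = -(Complex.I • v) by rw [neg_smul], map_neg, h1', neg_zero]
    · rw [show (-Complex.I) • v = -(Complex.I • v) by rw [neg_smul], map_neg, h2', neg_zero]
    · show Complex.I • ((-Complex.I) • v) = v
      rw [smul_smul]
      norm_num

lemma exists_c_iff_wedge (L₁ L₂ : (Fin m → ℂ) →ₗ[ℝ] ℝ) (h1 : phiOf L₁ ≠ 0) :
    (∃ c : ℂ, phiOf L₂ = c • phiOf L₁) ↔
      ∀ u v : Fin m → ℂ, phiOf L₁ u * phiOf L₂ v = phiOf L₁ v * phiOf L₂ u := by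
  constructor
  · rintro ⟨c, hc⟩ u v
    rw [hc]
    simp only [LinearMap.smul_apply, smul_eq_mul]
    ring
  · intro hw
    obtain ⟨u₀, hu₀⟩ : ∃ u₀, phiOf L₁ u₀ ≠ 0 := by
      by_contra h
      push_neg at h
      exact h1 (LinearMap.ext h)
    refine ⟨phiOf L₂ u₀ / phiOf L₁ u₀, LinearMap.ext fun v => ?_⟩
    rw [LinearMap.smul_apply, smul_eq_mul, div_mul_eq_mul_div, eq_div_iff hu₀]
    linear_combination hw u₀ v

lemma exists_c_iff_rank_one (L₁ L₂ : (Fin m → ℂ) →ₗ[ℝ] ℝ) (h1 : phiOf L₁ ≠ 0) :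
    (∃ c : ℂ, phiOf L₂ = c • phiOf L₁) ↔
      finrank ℂ ↥(LinearMap.range ((phiOf L₁).prod (phiOf L₂))) = 1 := by
  constructor
  · rintro ⟨c, hc⟩
    obtain ⟨u₀, hu₀⟩ : ∃ u₀, phiOf L₁ u₀ ≠ 0 := by
      by_contra h
      push_neg at h
      exact h1 (LinearMap.ext h)
    have hrange : LinearMap.range ((phiOf L₁).prod (phiOf L₂)) =
        Submodule.span ℂ {((1 : ℂ), c)} := by
      apply le_antisymm
      · rintro x ⟨v, rfl⟩
        rw [Submodule.mem_span_singleton]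
        refine ⟨phiOf L₁ v, ?_⟩
        simp only [LinearMap.prod_apply, Function.prod, hc, LinearMap.smul_apply,
          Prod.smul_mk, smul_eq_mul, mul_one]
        rw [mul_comm ((phiOf L₁) v) c]
      · rw [Submodule.span_le, Set.singleton_subset_iff]
        refine ⟨(phiOf L₁ u₀)⁻¹ • u₀, ?_⟩
        show ((phiOf L₁).prod (phiOf L₂)) ((phiOf L₁ u₀)⁻¹ • u₀) = (1, c)
        rw [map_smul]
        simp only [LinearMap.prod_apply, Function.prod, hc, LinearMap.smul_apply,
          Prod.smul_mk, smul_eq_mul]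
        rw [inv_mul_cancel₀ hu₀, mul_comm c, ← mul_assoc, inv_mul_cancel₀ hu₀, one_mul]
    rw [hrange]
    exact finrank_span_singleton (by simp)
  · intro hr
    obtain ⟨⟨⟨a, b⟩, hab⟩, hne, hgen⟩ :=
      (finrank_eq_one_iff' (K := ℂ)
        (V := ↥(LinearMap.range ((phiOf L₁).prod (phiOf L₂))))).mp hr
    have ha : a ≠ 0 := by
      intro ha0
      apply h1
      refine LinearMap.ext fun v => ?_
      have hv : ((phiOf L₁).prod (phiOf L₂)) v ∈
          LinearMap.range ((phiOf L₁).prod (phiOf L₂)) := LinearMap.mem_range_self _ v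
      obtain ⟨t, ht⟩ := hgen ⟨_, hv⟩
      have ht' : t • (a, b) = ((phiOf L₁).prod (phiOf L₂)) v := congrArg Subtype.val ht
      have : t * a = phiOf L₁ v := congrArg Prod.fst ht'
      simp only [LinearMap.zero_apply]
      rw [← this, ha0, mul_zero]
    refine ⟨b / a, LinearMap.ext fun v => ?_⟩
    have hv : ((phiOf L₁).prod (phiOf L₂)) v ∈
        LinearMap.range ((phiOf L₁).prod (phiOf L₂)) := LinearMap.mem_range_self _ v
    obtain ⟨t, ht⟩ := hgen ⟨_, hv⟩
    have ht' : t • (a, b) = ((phiOf L₁).prod (phiOf L₂)) v := congrArg Subtype.val ht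
    have h1' : t * a = phiOf L₁ v := congrArg Prod.fst ht'
    have h2' : t * b = phiOf L₂ v := congrArg Prod.snd ht'
    simp only [LinearMap.smul_apply, smul_eq_mul]
    rw [← h1', ← h2']
    field_simp

end Aux

theorem stmt_6 (n : ℕ) (ρ₁ ρ₂ : (Fin (n + 2) → ℂ) → ℝ)
    (hρ₁ : ContDiff ℝ (⊤ : ℕ∞) ρ₁) (hρ₂ : ContDiff ℝ (⊤ : ℕ∞) ρ₂)
    (p : Fin (n + 2) → ℂ) (hp₁ : ρ₁ p = 0) (hp₂ : ρ₂ p = 0)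
    (hind : LinearIndependent ℝ ![(fderiv ℝ ρ₁ p).toLinearMap, (fderiv ℝ ρ₂ p).toLinearMap]) :
    Module.finrank ℝ
        ↥((LinearMap.ker (fderiv ℝ ρ₁ p).toLinearMap ⊓
            LinearMap.ker (fderiv ℝ ρ₂ p).toLinearMap) ⊓
          ((LinearMap.ker (fderiv ℝ ρ₁ p).toLinearMap ⊓
            LinearMap.ker (fderiv ℝ ρ₂ p).toLinearMap)).map (Jstd (n + 2))) = 2 * n + 2 ↔
      ∀ u v : Fin (n + 2) → ℂ,
        dbar10 ρ₁ p u * dbar10 ρ₂ p v = dbar10 ρ₁ p v * dbar10 ρ₂ p u := by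
  set L₁ := (fderiv ℝ ρ₁ p).toLinearMap with hL₁
  set L₂ := (fderiv ℝ ρ₂ p).toLinearMap with hL₂
  have hL₁ne : L₁ ≠ 0 := by
    have := hind.ne_zero 0
    simpa using this
  have hφ₁ne : phiOf L₁ ≠ 0 := phiOf_ne_zero L₁ hL₁ne
  have hdb₁ : ∀ v, dbar10 ρ₁ p v = phiOf L₁ v := fun v => rfl
  have hdb₂ : ∀ v, dbar10 ρ₂ p v = phiOf L₂ v := fun v => rfl
  -- rewrite the subspace
  rw [tangent_eq_restrict L₁ L₂]
  -- real dimension is twice the complex dimension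
  set K : Submodule ℂ (Fin (n + 2) → ℂ) :=
    LinearMap.ker (phiOf L₁) ⊓ LinearMap.ker (phiOf L₂) with hK
  have hdim : finrank ℝ ↥(Submodule.restrictScalars ℝ K) = 2 * finrank ℂ ↥K := by
    have e : ↥(Submodule.restrictScalars ℝ K) ≃ₗ[ℝ] ↥K :=
      (Submodule.restrictScalarsEquiv ℝ ℂ (Fin (n + 2) → ℂ) K).restrictScalars ℝ
    rw [e.finrank_eq]
    rw [← Module.finrank_mul_finrank ℝ ℂ ↥K, Complex.finrank_real_complex]
  -- rank-nullity
  set Φ := (phiOf L₁).prod (phiOf L₂) with hΦ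
  have hker : LinearMap.ker Φ = K := LinearMap.ker_prod _ _
  have hrn : finrank ℂ ↥(LinearMap.range Φ) + finrank ℂ ↥K = n + 2 := by
    rw [← hker]
    rw [Φ.finrank_range_add_finrank_ker]
    simp [Module.finrank_fin_fun]
  rw [hdim]
  constructor
  · intro h
    have hKdim : finrank ℂ ↥K = n + 1 := by omega
    have hr1 : finrank ℂ ↥(LinearMap.range Φ) = 1 := by omega
    obtain ⟨c, hc⟩ := (exists_c_iff_rank_one L₁ L₂ hφ₁ne).mpr hr1
    intro u v
    rw [hdb₁, hdb₁, hdb₂, hdb₂]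
    exact (exists_c_iff_wedge L₁ L₂ hφ₁ne).mp ⟨c, hc⟩ u v
  · intro h
    have hw : ∀ u v, phiOf L₁ u * phiOf L₂ v = phiOf L₁ v * phiOf L₂ u := by
      intro u v
      have := h u v
      rwa [hdb₁, hdb₁, hdb₂, hdb₂] at this
    have hr1 : finrank ℂ ↥(LinearMap.range Φ) = 1 :=
      (exists_c_iff_rank_one L₁ L₂ hφ₁ne).mp ((exists_c_iff_wedge L₁ L₂ hφ₁ne).mpr hw)
    omega
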